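/- arXiv:1701.05039 — 6 statements merged into one kernel-verified Lean document; each statement's English description precedes it below -/
import Mathlib

section
/- For all x₁, x₂ ∈ {0,1} (viewed as natural numbers coerced to ℂ), one has ∑_{h∈{0,1}} exp(W_H(x₁,h) + W_H(x₂,h)) = (-1)^{x₁·x₂}/√2, where W_H(x,h) = iπ/8 − (ln 2)/2 − (iπ/2)·x − (iπ/4)·h + iπ·x·h. -/
open Complex Real

/-- The Hadamard gadget weight function
`W_H(x,h) = iπ/8 − (ln 2)/2 − (iπ/2)·x − (iπ/4)·h + iπ·x·h` for binary `x, h`. -/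
noncomputable def WH (x h : Fin 2) : ℂ :=
  Complex.I * Real.pi / 8 - Real.log 2 / 2 - Complex.I * Real.pi / 2 * ((x : ℕ) : ℂ)
    - Complex.I * Real.pi / 4 * ((h : ℕ) : ℂ) + Complex.I * Real.pi * ((x : ℕ) : ℂ) * ((h : ℕ) : ℂ)

private lemma sqrt_half : Real.sqrt 2 / 2 = 1 / Real.sqrt 2 := by
  rw [eq_div_iff (by positivity : Real.sqrt 2 ≠ 0), div_mul_eq_mul_div,
    Real.mul_self_sqrt (by norm_num : (0:ℝ) ≤ 2)]
  norm_num

private lemma key (θ : ℝ) :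
    Complex.exp ((-Real.log 2 : ℝ) + (θ : ℝ) * Complex.I)
      + Complex.exp ((-Real.log 2 : ℝ) + (-θ : ℝ) * Complex.I)
      = (Real.cos θ : ℂ) := by
  rw [Complex.exp_add, Complex.exp_add, ← mul_add, ← Complex.ofReal_exp, Real.exp_neg,
    Real.exp_log (by norm_num : (0:ℝ) < 2), Complex.exp_mul_I, Complex.exp_mul_I]
  push_cast [Complex.cos_neg, Complex.sin_neg]
  ring

/-- One hidden neuron with the Hadamard weight `W_H` on each of its two edges reproduces
the graph-state correlation `(-1)^{x₁ x₂}/√2`. -/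
theorem hadamard_gadget (x₁ x₂ : Fin 2) :
    ∑ h : Fin 2, Complex.exp (WH x₁ h + WH x₂ h)
      = (-1 : ℂ) ^ ((x₁ : ℕ) * (x₂ : ℕ)) / (Real.sqrt 2 : ℂ) := by
  fin_cases x₁ <;> fin_cases x₂ <;>
    simp only [Fin.sum_univ_two, WH, Fin.isValue, Fin.val_zero, Fin.val_one,
      Nat.cast_zero, Nat.cast_one, mul_zero, mul_one, zero_mul, one_mul,
      Nat.zero_mul, Nat.mul_zero, Nat.mul_one, pow_zero, pow_one]
  · convert key (Real.pi/4) using 2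
    · congr 1; push_cast; ring
    · congr 1; push_cast; ring
    · rw [Real.cos_pi_div_four, sqrt_half]; push_cast; ring
  · convert key (-(Real.pi/4)) using 2
    · congr 1; push_cast; ring
    · congr 1; push_cast; ring
    · rw [Real.cos_neg, Real.cos_pi_div_four, sqrt_half]; push_cast; ring
  · convert key (-(Real.pi/4)) using 2
    · congr 1; push_cast; ring
    · congr 1; push_cast; ring
    · rw [Real.cos_neg, Real.cos_pi_div_four, sqrt_half]; push_cast; ring
  · convert key (-(3*Real.pi/4)) using 2
    · congr 1; push_cast; ring
    · congr 1; push_cast; ring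
    · rw [Real.cos_neg, show 3*Real.pi/4 = Real.pi - Real.pi/4 by ring, Real.cos_pi_sub,
        Real.cos_pi_div_four, sqrt_half]
      push_cast; ring
end

section
/- Let G be a finite simple graph with vertex set V and edge set E. For every assignment v : V → {0,1}, the graph-state wave function Ψ(v) = ∏_{{i,j}∈E} (−1)^{v_i·v_j}/√2 admits the restricted Boltzmann machine representation Ψ(v) = ∑_{h : E → {0,1}} exp( ∑_{{i,j}∈E} ( W_H(v_i, h_{\{i,j\}}) + W_H(v_j, h_{\{i,j\}}) ) ), i.e. an RBM with one hidden neuron per edge of G, each connected to the two endpoint visible neurons with weight W_H, represents the graph state exactly. -/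
open Complex Real Finset

lemma two_exp (θ : ℝ) :
    Complex.exp (↑(-Real.log 2) + ↑θ * Complex.I) +
      Complex.exp (↑(-Real.log 2) + ↑(-θ) * Complex.I) = (Real.cos θ : ℂ) := by
  have h : Complex.exp (↑(-Real.log 2)) = 1/2 := by
    rw [← Complex.ofReal_exp, Real.exp_neg, Real.exp_log (by norm_num : (0:ℝ) < 2)]
    norm_num
  rw [Complex.exp_add, Complex.exp_add, h, Complex.exp_mul_I, Complex.exp_mul_I]
  push_cast
  rw [Complex.cos_neg, Complex.sin_neg]
  ring

lemma sqrt2C : ((Real.sqrt 2 : ℝ) : ℂ) ≠ 0 := by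
  simp [Real.sqrt_eq_zero']

lemma sum_exp (x y : Fin 2) :
    ∑ h : Fin 2, Complex.exp (WH x h + WH y h)
      = (Real.cos (Real.pi/4 - Real.pi*(((x:ℕ):ℝ)+((y:ℕ):ℝ))/2) : ℂ) := by
  have h0 : WH x 0 + WH y 0
      = ↑(-Real.log 2) + ↑(Real.pi/4 - Real.pi*(((x:ℕ):ℝ)+((y:ℕ):ℝ))/2) * Complex.I := by
    simp only [WH, Fin.isValue, Fin.val_zero, Nat.cast_zero]
    push_cast
    ring
  have h1 : WH x 1 + WH y 1
      = ↑(-Real.log 2) + ↑(-(Real.pi/4 - Real.pi*(((x:ℕ):ℝ)+((y:ℕ):ℝ))/2)) * Complex.I := by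
    simp only [WH, Fin.isValue, Fin.val_one, Nat.cast_one]
    push_cast
    ring
  rw [Fin.sum_univ_two, h0, h1, two_exp]

lemma hs2 : ((Real.sqrt 2 : ℝ) : ℂ) * ((Real.sqrt 2 : ℝ) : ℂ) = 2 := by
  rw [← Complex.ofReal_mul, Real.mul_self_sqrt (by norm_num)]
  norm_num

lemma key_s2 (x y : Fin 2) : (-1:ℂ)^((x:ℕ)*(y:ℕ)) / (Real.sqrt 2 : ℂ)
    = ∑ h : Fin 2, Complex.exp (WH x h + WH y h) := by
  rw [sum_exp]
  fin_cases x <;> fin_cases y <;>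
    simp only [Fin.isValue, Fin.val_zero, Fin.val_one, Nat.cast_zero, Nat.cast_one,
      Nat.mul_zero, Nat.zero_mul, Nat.mul_one, pow_zero, pow_one]
  · rw [show Real.pi/4 - Real.pi*((0:ℝ)+0)/2 = Real.pi/4 by ring, Real.cos_pi_div_four]
    push_cast
    rw [div_eq_div_iff sqrt2C two_ne_zero]
    linear_combination -hs2
  · rw [show Real.pi/4 - Real.pi*((0:ℝ)+1)/2 = -(Real.pi/4) by ring, Real.cos_neg,
      Real.cos_pi_div_four]
    push_cast
    rw [div_eq_div_iff sqrt2C two_ne_zero]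
    linear_combination -hs2
  · rw [show Real.pi/4 - Real.pi*((1:ℝ)+0)/2 = -(Real.pi/4) by ring, Real.cos_neg,
      Real.cos_pi_div_four]
    push_cast
    rw [div_eq_div_iff sqrt2C two_ne_zero]
    linear_combination -hs2
  · rw [show Real.pi/4 - Real.pi*((1:ℝ)+1)/2 = -(Real.pi - Real.pi/4) by ring, Real.cos_neg,
      Real.cos_pi_sub, Real.cos_pi_div_four]
    push_cast
    rw [neg_div, neg_inj, div_eq_div_iff sqrt2C two_ne_zero]
    linear_combination -hs2

/-- The graph-state wave function `Ψ(v) = ∏_{{i,j}∈E} (−1)^{v_i v_j}/√2` of a finite simple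
graph `G` is exactly represented by an RBM with one hidden neuron per edge, each connected to
the two endpoint visible neurons with the Hadamard weight `W_H`. -/
theorem graph_state_RBM {V : Type*} [Fintype V] [DecidableEq V]
    (G : SimpleGraph V) [DecidableRel G.Adj] (v : V → Fin 2) :
    ∏ e ∈ G.edgeFinset,
        Sym2.lift ⟨fun i j => ((-1 : ℂ) ^ ((v i : ℕ) * (v j : ℕ)) / (Real.sqrt 2 : ℂ)),
          fun i j => by dsimp only; rw [Nat.mul_comm]⟩ e
      = ∑ h : G.edgeFinset → Fin 2, Complex.exp
          (∑ e : G.edgeFinset,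
            Sym2.lift ⟨fun i j => WH (v i) (h e) + WH (v j) (h e),
              fun i j => by dsimp only; rw [add_comm]⟩ (e : Sym2 V)) := by
  calc ∏ e ∈ G.edgeFinset,
        Sym2.lift ⟨fun i j => ((-1 : ℂ) ^ ((v i : ℕ) * (v j : ℕ)) / (Real.sqrt 2 : ℂ)),
          fun i j => by dsimp only; rw [Nat.mul_comm]⟩ e
      = ∏ e : G.edgeFinset,
        Sym2.lift ⟨fun i j => ((-1 : ℂ) ^ ((v i : ℕ) * (v j : ℕ)) / (Real.sqrt 2 : ℂ)),
          fun i j => by dsimp only; rw [Nat.mul_comm]⟩ (e : Sym2 V) := by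
        exact (Finset.prod_coe_sort _ _).symm
    _ = ∏ e : G.edgeFinset, ∑ a : Fin 2, Complex.exp
          (Sym2.lift ⟨fun i j => WH (v i) a + WH (v j) a,
            fun i j => by dsimp only; rw [add_comm]⟩ (e : Sym2 V)) := by
        refine Finset.prod_congr rfl fun e _ => ?_
        induction (e : Sym2 V) using Sym2.ind with
        | _ i j => simp only [Sym2.lift_mk]; exact key_s2 (v i) (v j)
    _ = ∑ h : G.edgeFinset → Fin 2, Complex.exp
          (∑ e : G.edgeFinset,
            Sym2.lift ⟨fun i j => WH (v i) (h e) + WH (v j) (h e),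
              fun i j => by dsimp only; rw [add_comm]⟩ (e : Sym2 V)) := by
        rw [Finset.prod_univ_sum]
        rw [Fintype.piFinset_univ]
        exact Finset.sum_congr rfl fun h _ => (Complex.exp_sum _ _).symm
end

section
/- Let J, c ∈ ℂ satisfy cosh c = e^{J/2}, and set a = −J/2, b = −c, d = J/2. Then for all x₁, x₂ ∈ {0,1}, ∑_{h∈{0,1}} exp( a − ln 2 + b·(x₁+x₂)·(2h−1) + c·(2h−1) + d·(x₁+x₂) ) = e^{J·x₁·x₂}. -/
open Complex

/-! Summing out the hidden neuron turns `exp (w - log 2 + z (2h - 1))` into `exp w * cosh z`. With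
`s = x₁ + x₂`, `a = -J/2`, `b = -c`, `d = J/2` this is `exp (J (s - 1) / 2) * cosh (c (1 - s))`:
for `s = 1` both factors are `1`, and for `s = 0, 2` the hypothesis `cosh c = exp (J / 2)` makes
it `exp (J (s - 1) / 2 + J / 2) = exp (J s / 2)`, i.e. `1` and `exp J` respectively. -/

theorem sum_fin_two_exp_sub_log_two_add_spin (w z : ℂ) :
    ∑ h : Fin 2, exp (w - Real.log 2 + z * (2 * ((h : ℕ) : ℂ) - 1)) = exp w * cosh z := by
  have exp_sub_log_two : exp (w - Real.log 2) = exp w / 2 := by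
    rw [exp_sub, ← ofReal_exp, Real.exp_log two_pos, ofReal_ofNat]
  simp only [Fin.sum_univ_two, exp_add, exp_sub_log_two, cosh, Fin.val_zero, Fin.val_one,
    Nat.cast_zero, Nat.cast_one]
  ring_nf

theorem exp_mul_cosh_eq_exp_mul_mul_of_cosh_eq (J c : ℂ) (hc : cosh c = exp (J / 2))
    (x₁ x₂ : Fin 2) :
    exp (J / 2 * (((x₁ : ℕ) : ℂ) + ((x₂ : ℕ) : ℂ) - 1))
        * cosh (c * (1 - (((x₁ : ℕ) : ℂ) + ((x₂ : ℕ) : ℂ))))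
      = exp (J * ((x₁ : ℕ) : ℂ) * ((x₂ : ℕ) : ℂ)) := by
  fin_cases x₁ <;> fin_cases x₂ <;> simp only [Nat.cast_zero, Nat.cast_one]
  · rw [show c * (1 - (0 + 0)) = c by ring, hc, ← exp_add]; ring_nf
  · ring_nf; simp
  · ring_nf; simp
  · rw [show c * (1 - (1 + 1)) = -c by ring, cosh_neg, hc, ← exp_add]; ring_nf

/-- With `cosh c = e^{J/2}`, the parameters `a = −J/2`, `b = −c`, `d = J/2` let a single
hidden neuron simulate the pairwise interaction `e^{J x₁ x₂}` between two binary neurons. -/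
theorem pair_interaction_gadget (J c : ℂ) (hc : Complex.cosh c = Complex.exp (J / 2))
    (a b d : ℂ) (ha : a = -J / 2) (hb : b = -c) (hd : d = J / 2) (x₁ x₂ : Fin 2) :
    ∑ h : Fin 2, Complex.exp
        (a - Real.log 2 + b * (((x₁ : ℕ) : ℂ) + ((x₂ : ℕ) : ℂ)) * (2 * ((h : ℕ) : ℂ) - 1)
          + c * (2 * ((h : ℕ) : ℂ) - 1) + d * (((x₁ : ℕ) : ℂ) + ((x₂ : ℕ) : ℂ)))
      = Complex.exp (J * ((x₁ : ℕ) : ℂ) * ((x₂ : ℕ) : ℂ)) := by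
  subst ha hb hd
  set s : ℂ := ((x₁ : ℕ) : ℂ) + ((x₂ : ℕ) : ℂ)
  calc ∑ h : Fin 2, exp (-J / 2 - Real.log 2 + -c * s * (2 * ((h : ℕ) : ℂ) - 1)
          + c * (2 * ((h : ℕ) : ℂ) - 1) + J / 2 * s)
      = ∑ h : Fin 2, exp (J / 2 * (s - 1) - Real.log 2 + c * (1 - s) * (2 * ((h : ℕ) : ℂ) - 1)) :=
        Finset.sum_congr rfl fun _ _ => by ring_nf
    _ = exp (J / 2 * (s - 1)) * cosh (c * (1 - s)) := sum_fin_two_exp_sub_log_two_add_spin _ _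
    _ = exp (J * ((x₁ : ℕ) : ℂ) * ((x₂ : ℕ) : ℂ)) :=
        exp_mul_cosh_eq_exp_mul_mul_of_cosh_eq J c hc x₁ x₂
end

section
/- For every J ∈ ℂ there exist complex numbers a, b, c, d such that for all x₁, x₂ ∈ {0,1}, ∑_{h∈{0,1}} exp( a − ln 2 + b·(x₁+x₂)·(2h−1) + c·(2h−1) + d·(x₁+x₂) ) = e^{J·x₁·x₂}. -/
open Complex

lemma cosh_surj (w : ℂ) : ∃ c : ℂ, Complex.cosh c = w := by
  obtain ⟨z, hz⟩ := Complex.cos_surjective w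
  exact ⟨z * I, by rw [Complex.cosh_mul_I, hz]⟩

lemma gadget_key (u v : ℂ) :
    Complex.exp (u - (Real.log 2 : ℂ) - v) + Complex.exp (u - (Real.log 2 : ℂ) + v)
      = Complex.exp u * Complex.cosh v := by
  have h2 : Complex.exp ((Real.log 2 : ℂ)) = 2 := by
    rw [← Complex.ofReal_exp, Real.exp_log (by norm_num)]; norm_num
  have hv := Complex.exp_ne_zero v
  rw [Complex.cosh, Complex.exp_neg,
    show u - (Real.log 2 : ℂ) - v = (u - v) - (Real.log 2 : ℂ) by ring,
    show u - (Real.log 2 : ℂ) + v = (u + v) - (Real.log 2 : ℂ) by ring,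
    Complex.exp_sub, Complex.exp_sub, Complex.exp_sub, Complex.exp_add, h2]
  ring

/-- For every `J ∈ ℂ` there exist parameters `a, b, c, d` such that a single hidden neuron
simulates the pairwise interaction `e^{J x₁ x₂}` between two binary neurons. -/
theorem pair_interaction_gadget_exists (J : ℂ) :
    ∃ a b c d : ℂ, ∀ x₁ x₂ : Fin 2,
      ∑ h : Fin 2, Complex.exp
          (a - Real.log 2 + b * (((x₁ : ℕ) : ℂ) + ((x₂ : ℕ) : ℂ)) * (2 * ((h : ℕ) : ℂ) - 1)
            + c * (2 * ((h : ℕ) : ℂ) - 1) + d * (((x₁ : ℕ) : ℂ) + ((x₂ : ℕ) : ℂ)))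
        = Complex.exp (J * ((x₁ : ℕ) : ℂ) * ((x₂ : ℕ) : ℂ)) := by
  obtain ⟨c, hc⟩ := cosh_surj (Complex.exp (J / 2))
  refine ⟨-J / 2, -c, c, J / 2, ?_⟩
  intro x₁ x₂
  rw [Fin.sum_univ_two]
  fin_cases x₁ <;> fin_cases x₂ <;> simp only [Fin.val_zero, Fin.val_one, Fin.isValue,
    Nat.cast_zero, Nat.cast_one]
  · have := gadget_key (-J / 2) c
    rw [show (-J/2 - (Real.log 2 : ℂ) - c) = -J / 2 - ↑(Real.log 2) + -c * (0 + 0) * (2 * 0 - 1) + c * (2 * 0 - 1) + J / 2 * (0 + 0) by ring,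
      show (-J/2 - (Real.log 2 : ℂ) + c) = -J / 2 - ↑(Real.log 2) + -c * (0 + 0) * (2 * 1 - 1) + c * (2 * 1 - 1) + J / 2 * (0 + 0) by ring] at this
    rw [this, hc, ← Complex.exp_add]
    ring_nf
    try simp [Complex.exp_zero]
  · have := gadget_key (0 : ℂ) 0
    rw [show ((0:ℂ) - (Real.log 2 : ℂ) - 0) = -J / 2 - ↑(Real.log 2) + -c * (0 + 1) * (2 * 0 - 1) + c * (2 * 0 - 1) + J / 2 * (0 + 1) by ring,
      show ((0:ℂ) - (Real.log 2 : ℂ) + 0) = -J / 2 - ↑(Real.log 2) + -c * (0 + 1) * (2 * 1 - 1) + c * (2 * 1 - 1) + J / 2 * (0 + 1) by ring] at this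
    rw [this, Complex.cosh_zero, Complex.exp_zero]
    ring_nf
    try simp [Complex.exp_zero]
  · have := gadget_key (0 : ℂ) 0
    rw [show ((0:ℂ) - (Real.log 2 : ℂ) - 0) = -J / 2 - ↑(Real.log 2) + -c * (1 + 0) * (2 * 0 - 1) + c * (2 * 0 - 1) + J / 2 * (1 + 0) by ring,
      show ((0:ℂ) - (Real.log 2 : ℂ) + 0) = -J / 2 - ↑(Real.log 2) + -c * (1 + 0) * (2 * 1 - 1) + c * (2 * 1 - 1) + J / 2 * (1 + 0) by ring] at this
    rw [this, Complex.cosh_zero, Complex.exp_zero]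
    ring_nf
    try simp [Complex.exp_zero]
  · have := gadget_key (J / 2) (-c)
    rw [show (J/2 - (Real.log 2 : ℂ) - -c) = -J / 2 - ↑(Real.log 2) + -c * (1 + 1) * (2 * 0 - 1) + c * (2 * 0 - 1) + J / 2 * (1 + 1) by ring,
      show (J/2 - (Real.log 2 : ℂ) + -c) = -J / 2 - ↑(Real.log 2) + -c * (1 + 1) * (2 * 1 - 1) + c * (2 * 1 - 1) + J / 2 * (1 + 1) by ring] at this
    rw [this, Complex.cosh_neg, hc, ← Complex.exp_add]
    ring_nf
    try simp [Complex.exp_zero]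
end

section
/- Let β ∈ ℝ and let G be a finite simple graph with vertex set V and edge set E. Then there exist complex numbers a, b, c, d such that for every v : V → {0,1}, ∑_{h : E → {0,1}} exp( ∑_{{i,j}∈E} ( a − ln 2 + b·(v_i+v_j)·(2h_{\{i,j\}}−1) + c·(2h_{\{i,j\}}−1) + d·(v_i+v_j) ) ) = ∏_{{i,j}∈E} e^{−β·v_i·v_j/2}, i.e. the coherent thermal state wave function is exactly represented by an RBM with one hidden neuron per edge. -/
open Complex Real Finset

/-!
Summing out the hidden unit of an edge `{i, j}` gives `exp (a + d s) * cosh (b s + c)` with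
`s = v i + v j ∈ {0, 1, 2}`, and the hidden units of different edges are summed independently, so
the whole sum factorises over the edges. Taking `a = β / 4`, `d = -β / 4`, `b = -c` with
`cosh c = exp (-β / 4)` (possible since `cosh` is surjective on `ℂ`), the edge factor is
`1, 1, exp (-β / 2)` for `s = 0, 1, 2`, which is `exp (-β v_i v_j / 2)`.
-/

lemma Complex.cosh_surjective : Function.Surjective Complex.cosh := fun z => by
  obtain ⟨w, hw⟩ := Complex.cos_surjective z
  exact ⟨w * I, by rw [cosh_mul_I, hw]⟩

lemma sum_exp_sum_eq_prod_sum_exp {ι κ : Type*} [Fintype ι] [DecidableEq ι] [Fintype κ]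
    (f : ι → κ → ℂ) :
    ∑ h : ι → κ, Complex.exp (∑ e, f e (h e)) = ∏ e, ∑ k, Complex.exp (f e k) := by
  simp only [Complex.exp_sum, Fintype.prod_sum]

lemma sum_hidden_exp_eq_exp_mul_cosh (a b c d s : ℂ) :
    ∑ k : Fin 2, Complex.exp (a - Real.log 2 + b * s * (2 * ((k : ℕ) : ℂ) - 1)
        + c * (2 * ((k : ℕ) : ℂ) - 1) + d * s) =
      Complex.exp (a + d * s) * Complex.cosh (b * s + c) := by
  have hlog : Complex.exp (Real.log 2) = 2 := by
    rw [← ofReal_exp, Real.exp_log two_pos, ofReal_ofNat]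
  simp only [Fin.sum_univ_two, Fin.val_zero, Fin.val_one, Nat.cast_zero, Nat.cast_one]
  rw [Complex.cosh, show a - Real.log 2 + b * s * (2 * 0 - 1) + c * (2 * 0 - 1) + d * s
      = a + d * s + -(b * s + c) - Real.log 2 by ring,
    show a - Real.log 2 + b * s * (2 * 1 - 1) + c * (2 * 1 - 1) + d * s
      = a + d * s + (b * s + c) - Real.log 2 by ring]
  simp only [Complex.exp_add, Complex.exp_sub, hlog]
  ring

lemma sum_hidden_pairwise_gadget (β : ℝ) (c : ℂ) (hc : Complex.cosh c = Complex.exp (-β / 4))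
    (m n : Fin 2) :
    ∑ k : Fin 2, Complex.exp ((β / 4 : ℂ) - Real.log 2
        + -c * (((m : ℕ) : ℂ) + ((n : ℕ) : ℂ)) * (2 * ((k : ℕ) : ℂ) - 1)
        + c * (2 * ((k : ℕ) : ℂ) - 1) + (-β / 4 : ℂ) * (((m : ℕ) : ℂ) + ((n : ℕ) : ℂ)))
      = Complex.exp (-(β : ℂ) * ((m : ℕ) : ℂ) * ((n : ℕ) : ℂ) / 2) := by
  rw [sum_hidden_exp_eq_exp_mul_cosh]
  fin_cases m <;> fin_cases n <;> norm_num
  · rw [hc, ← Complex.exp_add, neg_div, add_neg_cancel, Complex.exp_zero]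
  · rw [neg_div, add_neg_cancel, Complex.exp_zero]
  · rw [neg_div, add_neg_cancel, Complex.exp_zero]
  · rw [show -(c * 2) + c = -c by ring, Complex.cosh_neg, hc, ← Complex.exp_add]
    ring_nf

section

variable {V : Type*}

noncomputable def rbmEdgeWeight (a b c d : ℂ) (v : V → Fin 2) (e : Sym2 V) (k : Fin 2) : ℂ :=
  Sym2.lift ⟨fun i j => a - Real.log 2
      + b * (((v i : ℕ) : ℂ) + ((v j : ℕ) : ℂ)) * (2 * ((k : ℕ) : ℂ) - 1)
      + c * (2 * ((k : ℕ) : ℂ) - 1) + d * (((v i : ℕ) : ℂ) + ((v j : ℕ) : ℂ)),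
    fun i j => by dsimp only; ring⟩ e

noncomputable def isingEdgeAmplitude (β : ℝ) (v : V → Fin 2) : Sym2 V → ℂ :=
  Sym2.lift ⟨fun i j => Complex.exp (-(β : ℂ) * ((v i : ℕ) : ℂ) * ((v j : ℕ) : ℂ) / 2),
    fun i j => by dsimp only; ring_nf⟩

end

/-- The coherent thermal state wave function `∏_{⟨i,j⟩∈E} e^{−β v_i v_j/2}` of the classical
Ising model on a finite simple graph `G` is exactly represented by an RBM with one hidden
neuron per edge, with weights of the pairwise-interaction gadget form
`a − ln 2 + b(v_i+v_j)(2h−1) + c(2h−1) + d(v_i+v_j)`. -/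
theorem coherent_thermal_state_RBM (β : ℝ) {V : Type*} [Fintype V] [DecidableEq V]
    (G : SimpleGraph V) [DecidableRel G.Adj] :
    ∃ a b c d : ℂ, ∀ v : V → Fin 2,
      ∑ h : G.edgeFinset → Fin 2, Complex.exp
          (∑ e : G.edgeFinset,
            Sym2.lift ⟨fun i j =>
                a - Real.log 2
                  + b * (((v i : ℕ) : ℂ) + ((v j : ℕ) : ℂ)) * (2 * ((h e : ℕ) : ℂ) - 1)
                  + c * (2 * ((h e : ℕ) : ℂ) - 1) + d * (((v i : ℕ) : ℂ) + ((v j : ℕ) : ℂ)),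
              fun i j => by dsimp only; ring⟩ (e : Sym2 V))
        = ∏ e ∈ G.edgeFinset,
            Sym2.lift ⟨fun i j => Complex.exp (-(β : ℂ) * ((v i : ℕ) : ℂ) * ((v j : ℕ) : ℂ) / 2),
              fun i j => by dsimp only; ring_nf⟩ e := by
  obtain ⟨c, hc⟩ := Complex.cosh_surjective (Complex.exp (-β / 4))
  refine ⟨β / 4, -c, c, -β / 4, fun v => ?_⟩
  change ∑ h : G.edgeFinset → Fin 2, Complex.exp (∑ e : G.edgeFinset,
      rbmEdgeWeight (β / 4) (-c) c (-β / 4) v e (h e)) =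
    ∏ e ∈ G.edgeFinset, isingEdgeAmplitude β v e
  rw [sum_exp_sum_eq_prod_sum_exp, ← Finset.prod_coe_sort G.edgeFinset]
  refine Finset.prod_congr rfl fun ⟨e, _⟩ _ => ?_
  induction e using Sym2.ind with
  | h i j => exact sum_hidden_pairwise_gadget β c hc (v i) (v j)
end

section
/- Let t ≥ 0 be a real number, let ε ∈ (0,1], let n be a natural number, and let K be a natural number satisfying K ≥ e²·t and K ≥ (n+1) + log₂(1/ε). Then 2^n · t^K / K! ≤ ε/2. -/
/-!
From `K! ≥ (K/e)^K` we get `t^K/K! ≤ (e t/K)^K`, which is at most `e^{-K} < 2^{-K}` once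
`K ≥ e² t`; the second condition on `K` says exactly that `2^{n+1-K} ≤ ε`.
-/

open Real Nat

lemma pow_div_factorial_le_exp_one_mul_div_pow {t : ℝ} (ht : 0 ≤ t) (K : ℕ) :
    t ^ K / K ! ≤ (exp 1 * t / K) ^ K := by
  rcases K.eq_zero_or_pos with rfl | hK
  · simp
  have hKR : (0 : ℝ) < K := by exact_mod_cast hK
  calc t ^ K / K ! = (t / K) ^ K * ((K : ℝ) ^ K / K !) := by
        rw [div_pow, div_mul_div_cancel₀ (by positivity)]
    _ ≤ (t / K) ^ K * exp K := by gcongr; exact pow_div_factorial_le_exp _ hKR.le K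
    _ = (exp 1 * t / K) ^ K := by rw [← exp_one_pow, ← mul_pow, mul_comm, mul_div_assoc]

lemma pow_div_factorial_le_inv_two_pow {t : ℝ} (ht : 0 ≤ t) {K : ℕ}
    (hK : exp 1 ^ 2 * t ≤ K) : t ^ K / K ! ≤ (2 ^ K)⁻¹ := by
  have hratio : exp 1 * t / K ≤ 2⁻¹ := by
    refine div_le_of_le_mul₀ (Nat.cast_nonneg K) (by norm_num) ?_
    nlinarith [exp_one_gt_two, mul_nonneg ht (exp_pos 1).le]
  calc t ^ K / K ! ≤ (exp 1 * t / K) ^ K := pow_div_factorial_le_exp_one_mul_div_pow ht K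
    _ ≤ (2⁻¹) ^ K := by gcongr
    _ = (2 ^ K)⁻¹ := inv_pow 2 K

lemma two_pow_succ_le_mul_two_pow {ε : ℝ} (hε : 0 < ε) {n K : ℕ}
    (h : n + 1 + logb 2 (1 / ε) ≤ K) : (2 : ℝ) ^ (n + 1) ≤ ε * 2 ^ K := by
  have hrpow : 1 / ε ≤ (2 : ℝ) ^ ((K : ℝ) - (n + 1 : ℕ)) :=
    (logb_le_iff_le_rpow one_lt_two (by positivity)).1 (by push_cast; linarith)
  rw [rpow_sub two_pos, rpow_natCast, rpow_natCast, one_div, inv_le_iff_one_le_mul₀ hε,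
    div_mul_eq_mul_div, one_le_div₀ (by positivity)] at hrpow
  linarith

/-- Choosing the Taylor truncation order `K ≥ e²·t` with `K ≥ (n+1) + log₂(1/ε)` makes the
truncation error term `2^n · t^K / K!` at most `ε/2`. -/
theorem taylor_truncation_order_suffices (t : ℝ) (ht : 0 ≤ t) (ε : ℝ)
    (hε : ε ∈ Set.Ioc (0 : ℝ) 1) (n K : ℕ)
    (hK₁ : (K : ℝ) ≥ Real.exp 1 ^ 2 * t)
    (hK₂ : (K : ℝ) ≥ ((n : ℝ) + 1) + Real.logb 2 (1 / ε)) :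
    2 ^ n * t ^ K / (K.factorial : ℝ) ≤ ε / 2 := by
  have hpow : (2 : ℝ) ^ (n + 1) ≤ ε * 2 ^ K := two_pow_succ_le_mul_two_pow hε.1 hK₂
  calc 2 ^ n * t ^ K / (K.factorial : ℝ) = 2 ^ n * (t ^ K / K !) := mul_div_assoc _ _ _
    _ ≤ 2 ^ n * (2 ^ K)⁻¹ := by gcongr; exact pow_div_factorial_le_inv_two_pow ht hK₁
    _ ≤ ε / 2 := by
      rw [← div_eq_mul_inv, div_le_div_iff₀ (by positivity) two_pos, ← pow_succ]
      linarith
end
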